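/- (Super-hedge of Impermanent Loss) Under the hypotheses of the super-hedge theorem, the Impermanent Loss Ψ_T = Y₀ + X₀S*_T - V_T satisfies Ψ_T ≤ ∫₀^T (X₀ - X_t) dS*_t, i.e., IL is dominated by the gains of the self-financing rebalancing strategy holding X₀ - X_t units of the first asset. -/

import Mathlib

/-!
Summation by parts turns a left-endpoint Riemann sum of `∫ (X₀ - X) dS*` into `Ψ_T` plus the
pool's gains `S*(b) (X b - X a) + (Y b - Y a)` over the cells `(a, b]` of the partition. On a
cell, the continuous trades run at `B = S*` or `A = S*`, so `dY ≈ -S* dX` up to the oscillation of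
`S*`; each jump has nonnegative value at the current price, by concavity of the trading function
`x^α y^(1-α)` together with the no-arbitrage band `B₋ ≤ S* ≤ A₋`. The gains are therefore bounded
below by `-ε` times the variation of `X`, and refining the partition gives `Ψ_T ≤ I`.
-/

open MeasureTheory Set

noncomputable def heaviside (z : ℝ) : ℝ := if 0 < z then 1 else 0

theorem heaviside_of_pos {z : ℝ} (hz : 0 < z) : heaviside z = 1 := if_pos hz

theorem heaviside_of_nonpos {z : ℝ} (hz : z ≤ 0) : heaviside z = 0 := if_neg hz.not_gt

theorem Fin.sum_succ_sub_castSucc {M : Type*} [AddCommGroup M] {n : ℕ} (f : Fin (n + 1) → M) :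
    ∑ i : Fin n, (f i.succ - f i.castSucc) = f (Fin.last n) - f 0 := by
  induction n with
  | zero => simp
  | succ n ih =>
    rw [Fin.sum_univ_castSucc]
    simp only [Fin.succ_castSucc]
    rw [ih (fun i => f i.castSucc)]
    simp only [Fin.succ_last, Fin.castSucc_zero]
    abel

theorem Finset.sum_filter_le_eq_sum_filter_lt_add {ι M : Type*} [LinearOrder ι]
    [AddCommMonoid M] {J : Finset ι} {s : ι} (hs : s ∈ J) (f : ι → M) :
    ∑ u ∈ J.filter (· ≤ s), f u = ∑ u ∈ J.filter (· < s), f u + f s := by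
  have hs' : s ∈ J.filter (· ≤ s) := Finset.mem_filter.2 ⟨hs, le_rfl⟩
  rw [← Finset.add_sum_erase _ _ hs', add_comm]
  congr 2
  ext u
  simp only [Finset.mem_erase, Finset.mem_filter, lt_iff_le_and_ne]
  tauto

theorem Finset.sum_filter_le_eq_add_sum_filter_Ioc {ι M : Type*} [LinearOrder ι]
    [AddCommMonoid M] (J : Finset ι) (f : ι → M) {a b : ι} (hab : a ≤ b) :
    ∑ s ∈ J.filter (· ≤ b), f s
      = ∑ s ∈ J.filter (· ≤ a), f s + ∑ s ∈ J.filter (· ∈ Set.Ioc a b), f s := by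
  rw [← Finset.sum_filter_add_sum_filter_not (J.filter (· ≤ b)) (· ≤ a), Finset.filter_filter,
    Finset.filter_filter]
  congr 2 <;> ext s <;> simp only [Finset.mem_filter, Set.mem_Ioc, not_le]
  · exact ⟨fun h => ⟨h.1, h.2.2⟩, fun h => ⟨h.1, h.2.trans hab, h.2⟩⟩
  · exact ⟨fun h => ⟨h.1, h.2.2, h.2.1⟩, fun h => ⟨h.1, h.2.2, h.2.1⟩⟩

theorem exists_partition_mesh_lt {T δ : ℝ} (hT : 0 ≤ T) (hδ : 0 < δ) :
    ∃ (n : ℕ) (t : Fin (n + 1) → ℝ), Monotone t ∧ t 0 = 0 ∧ t (Fin.last n) = T ∧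
      ∀ i : Fin n, t i.succ - t i.castSucc < δ := by
  obtain ⟨N, hN⟩ := exists_nat_gt (T / δ)
  have hN1 : (0 : ℝ) < N + 1 := by positivity
  refine ⟨N + 1, fun i => i * (T / (N + 1)), fun i j hij => ?_, by simp, ?_, fun i => ?_⟩
  · have : (i : ℝ) ≤ j := by exact_mod_cast hij
    exact mul_le_mul_of_nonneg_right this (by positivity)
  · simp only [Fin.val_last]; push_cast; field_simp
  · simp only [Fin.val_succ, Fin.val_castSucc]; push_cast
    rw [div_lt_iff₀ hδ] at hN
    rw [add_mul, one_mul, add_sub_cancel_left, div_lt_iff₀ hN1]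
    linarith

theorem sub_le_riemannSum_add_of_increment_ge {n : ℕ} (t : Fin (n + 1) → ℝ)
    (S X Y V : ℝ → ℝ) {ε : ℝ} (h : ∀ i : Fin n, -ε * (V (t i.succ) - V (t i.castSucc)) ≤
      S (t i.succ) * (X (t i.succ) - X (t i.castSucc)) + (Y (t i.succ) - Y (t i.castSucc))) :
    Y (t 0) + X (t 0) * S (t (Fin.last n))
        - (Y (t (Fin.last n)) + X (t (Fin.last n)) * S (t (Fin.last n)))
      ≤ ∑ i : Fin n, (X (t 0) - X (t i.castSucc)) * (S (t i.succ) - S (t i.castSucc))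
        + ε * (V (t (Fin.last n)) - V (t 0)) := by
  have hΦ := Fin.sum_succ_sub_castSucc fun i =>
    X (t 0) * S (t i) - X (t i) * S (t i) - Y (t i)
  have hV := Fin.sum_succ_sub_castSucc fun i => V (t i)
  have hG := Finset.sum_le_sum fun i (_ : i ∈ Finset.univ) => h i
  rw [← Finset.mul_sum, hV] at hG
  have hparts : ∑ i : Fin n, (X (t 0) - X (t i.castSucc)) * (S (t i.succ) - S (t i.castSucc))
      = ∑ i : Fin n, ((X (t 0) * S (t i.succ) - X (t i.succ) * S (t i.succ) - Y (t i.succ))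
          - (X (t 0) * S (t i.castSucc) - X (t i.castSucc) * S (t i.castSucc) - Y (t i.castSucc)))
        + ∑ i : Fin n, (S (t i.succ) * (X (t i.succ) - X (t i.castSucc))
          + (Y (t i.succ) - Y (t i.castSucc))) := by
    rw [← Finset.sum_add_distrib]
    exact Finset.sum_congr rfl fun i _ => by ring
  rw [hparts, hΦ]
  linarith

theorem one_le_weighted_sum_div_of_geom_mean_le {α a b u v : ℝ} (hα₀ : 0 ≤ α) (hα₁ : α ≤ 1)
    (ha : 0 < a) (hb : 0 < b) (hu : 0 ≤ u) (hv : 0 ≤ v)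
    (h : a ^ α * b ^ (1 - α) ≤ u ^ α * v ^ (1 - α)) :
    1 ≤ α * (u / a) + (1 - α) * (v / b) := by
  have hpos : 0 < a ^ α * b ^ (1 - α) := by positivity
  have hratio : 1 ≤ (u / a) ^ α * (v / b) ^ (1 - α) := by
    rw [Real.div_rpow hu ha.le, Real.div_rpow hv hb.le, div_mul_div_comm, one_le_div hpos]
    exact h
  exact hratio.trans (Real.geom_mean_le_arith_mean2_weighted hα₀ (by linarith)
    (div_nonneg hu ha.le) (div_nonneg hv hb.le) (by ring))

theorem tangent_nonneg_of_geom_mean_le {α a b u v : ℝ} (hα₀ : 0 ≤ α) (hα₁ : α < 1)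
    (ha : 0 < a) (hb : 0 < b) (hu : 0 ≤ u) (hv : 0 ≤ v)
    (h : a ^ α * b ^ (1 - α) ≤ u ^ α * v ^ (1 - α)) :
    0 ≤ α / (1 - α) * b / a * (u - a) + (v - b) := by
  have h1 := one_le_weighted_sum_div_of_geom_mean_le hα₀ hα₁.le ha hb hu hv h
  have hα : 0 < 1 - α := by linarith
  have key : α / (1 - α) * b / a * (u - a) + (v - b)
      = b / (1 - α) * (α * (u / a) + (1 - α) * (v / b) - 1) := by
    field_simp; ring
  rw [key]
  exact mul_nonneg (by positivity) (by linarith)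

theorem mul_add_nonneg_of_fee_tangent {p τ S dx dy : ℝ} (hp : 0 < p) (hτ : τ < 1)
    (hlo : (1 - τ) * p ≤ S) (hhi : S ≤ p / (1 - τ)) (hxy : dx * dy ≤ 0)
    (h : 0 ≤ p * ((1 - τ * heaviside dx) * dx) + (1 - τ * heaviside dy) * dy) :
    0 ≤ S * dx + dy := by
  have hτ' : 0 < 1 - τ := by linarith
  rcases lt_or_ge 0 dx with hx | hx
  · have hy : dy ≤ 0 := by nlinarith
    rw [heaviside_of_pos hx, heaviside_of_nonpos hy] at h
    nlinarith
  rcases lt_or_ge 0 dy with hy | hy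
  · rw [heaviside_of_nonpos hx, heaviside_of_pos hy] at h
    rw [le_div_iff₀ hτ'] at hhi
    nlinarith
  · rw [heaviside_of_nonpos hx, heaviside_of_nonpos hy] at h
    have : dx = 0 := by nlinarith
    subst this
    linarith

theorem add_fee_mul_pos {τ a d : ℝ} (hτ : τ < 1) (ha : 0 < a) (had : 0 < a + d) :
    0 < a + (1 - τ * heaviside d) * d := by
  rcases lt_or_ge 0 d with hd | hd
  · rw [heaviside_of_pos hd]; nlinarith
  · rwa [heaviside_of_nonpos hd, mul_zero, sub_zero, one_mul]

theorem jump_value_nonneg {α τ β a b dx dy S : ℝ} (hα : α ∈ Ioo (0 : ℝ) 1) (hτ : τ < 1)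
    (hβ : β = α / (1 - α)) (ha : 0 < a) (hb : 0 < b) (hadx : 0 < a + dx) (hbdy : 0 < b + dy)
    (hlo : (1 - τ) * β * b / a ≤ S) (hhi : S ≤ β * b / ((1 - τ) * a)) (hxy : dx * dy ≤ 0)
    (htrade : a ^ α * b ^ (1 - α) ≤
      (a + (1 - τ * heaviside dx) * dx) ^ α * (b + (1 - τ * heaviside dy) * dy) ^ (1 - α)) :
    0 ≤ S * dx + dy := by
  have htangent := tangent_nonneg_of_geom_mean_le hα.1.le hα.2 ha hb
    (add_fee_mul_pos hτ ha hadx).le (add_fee_mul_pos hτ hb hbdy).le htrade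
  rw [← hβ, add_sub_cancel_left, add_sub_cancel_left] at htangent
  -- `β * b / a` is the pool's marginal price at the reserves `(a, b)`
  have hp : 0 < β * b / a := div_pos (mul_pos (hβ ▸ div_pos hα.1 (sub_pos.2 hα.2)) hb) ha
  refine mul_add_nonneg_of_fee_tangent hp hτ ?_ ?_ hxy htangent
  · convert hlo using 1; ring
  · convert hhi using 1; rw [div_div, mul_comm a]

namespace StieltjesFunction

variable {F G : StieltjesFunction ℝ} {f : ℝ → ℝ} {a b c : ℝ}

theorem measure_Ioc_withDensity
    (hG : G.measure = F.measure.withDensity fun t => ENNReal.ofReal (f t)) (a b : ℝ) :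
    ENNReal.ofReal (G b - G a) = ∫⁻ u in Ioc a b, ENNReal.ofReal (f u) ∂F.measure := by
  rw [← G.measure_Ioc, hG, withDensity_apply _ measurableSet_Ioc]

theorem sub_le_mul_sub_of_ae_le (hab : a ≤ b)
    (hG : G.measure = F.measure.withDensity fun t => ENNReal.ofReal (f t))
    (hc : 0 ≤ c) (hf : ∀ᵐ u ∂F.measure.restrict (Ioc a b), f u ≤ c) :
    G b - G a ≤ c * (F b - F a) := by
  have h : ENNReal.ofReal (G b - G a) ≤ ENNReal.ofReal (c * (F b - F a)) := by
    calc ENNReal.ofReal (G b - G a) = ∫⁻ u in Ioc a b, ENNReal.ofReal (f u) ∂F.measure :=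
          measure_Ioc_withDensity hG a b
      _ ≤ ∫⁻ _ in Ioc a b, ENNReal.ofReal c ∂F.measure :=
          lintegral_mono_ae (hf.mono fun u hu => ENNReal.ofReal_le_ofReal hu)
      _ = ENNReal.ofReal (c * (F b - F a)) := by
          rw [setLIntegral_const, F.measure_Ioc, ENNReal.ofReal_mul hc]
  exact (ENNReal.ofReal_le_ofReal_iff (mul_nonneg hc (sub_nonneg.2 (F.mono hab)))).1 h

theorem mul_sub_le_sub_of_ae_le (hab : a ≤ b)
    (hG : G.measure = F.measure.withDensity fun t => ENNReal.ofReal (f t))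
    (hf : ∀ᵐ u ∂F.measure.restrict (Ioc a b), c ≤ f u) :
    c * (F b - F a) ≤ G b - G a := by
  rcases le_or_gt c 0 with hc | hc
  · exact (mul_nonpos_of_nonpos_of_nonneg hc (sub_nonneg.2 (F.mono hab))).trans
      (sub_nonneg.2 (G.mono hab))
  have h : ENNReal.ofReal (c * (F b - F a)) ≤ ENNReal.ofReal (G b - G a) := by
    calc ENNReal.ofReal (c * (F b - F a)) = ∫⁻ _ in Ioc a b, ENNReal.ofReal c ∂F.measure := by
          rw [setLIntegral_const, F.measure_Ioc, ENNReal.ofReal_mul hc.le]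
      _ ≤ ∫⁻ u in Ioc a b, ENNReal.ofReal (f u) ∂F.measure :=
          lintegral_mono_ae (hf.mono fun u hu => ENNReal.ofReal_le_ofReal hu)
      _ = ENNReal.ofReal (G b - G a) := (measure_Ioc_withDensity hG a b).symm
  exact (ENNReal.ofReal_le_ofReal_iff (sub_nonneg.2 (G.mono hab))).1 h

end StieltjesFunction

theorem ae_restrict_Ioc_abs_sub_le {μ : Measure ℝ} {f S : ℝ → ℝ} {a b ε : ℝ}
    (hfS : μ {t | f t ≠ S t} = 0) (hosc : ∀ u ∈ Ioc a b, |S u - S b| ≤ ε) :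
    ∀ᵐ u ∂μ.restrict (Ioc a b), |f u - S b| ≤ ε := by
  filter_upwards [ae_restrict_of_ae (measure_eq_zero_iff_ae_notMem.1 hfS),
    ae_restrict_mem measurableSet_Ioc] with u hu hmem
  rw [not_not] at hu
  rw [hu]
  exact hosc u hmem

theorem ContinuousOn.exists_pos_forall_Ioc_abs_sub_le {S : ℝ → ℝ} {c d ε : ℝ}
    (hS : ContinuousOn S (Icc c d)) (hε : 0 < ε) :
    ∃ δ > 0, ∀ a b, c ≤ a → b ≤ d → b - a < δ → ∀ u ∈ Ioc a b, |S u - S b| ≤ ε := by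
  obtain ⟨δ, hδ, h⟩ := Metric.uniformContinuousOn_iff.1
    (isCompact_Icc.uniformContinuousOn_of_continuous hS) ε hε
  refine ⟨δ, hδ, fun a b hca hbd hab u hu => ?_⟩
  have hdist : dist u b < δ := by
    rw [Real.dist_eq, abs_of_nonpos (by linarith [hu.2])]; linarith [hu.1]
  exact (h u ⟨hca.trans hu.1.le, hu.2.trans hbd⟩ b ⟨hca.trans (hu.1.le.trans hu.2), hbd⟩ hdist).le

noncomputable def reserveVariation (Xup Xdown : StieltjesFunction ℝ) (J : Finset ℝ) (Δx : ℝ → ℝ)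
    (t : ℝ) : ℝ :=
  Xup t + Xdown t + ∑ s ∈ J.filter (· ≤ t), |Δx s|

theorem reserve_value_increment_ge {x₀ y₀ a b ε : ℝ} {J : Finset ℝ}
    {Xup Xdown Yup Ydown : StieltjesFunction ℝ} {S B A X Y Δx Δy : ℝ → ℝ}
    (hX : ∀ t, X t = x₀ + Xup t - Xdown t + ∑ s ∈ J.filter (· ≤ t), Δx s)
    (hY : ∀ t, Y t = y₀ + Yup t - Ydown t + ∑ s ∈ J.filter (· ≤ t), Δy s)
    (hYd : Ydown.measure = Xup.measure.withDensity fun t => ENNReal.ofReal (B t))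
    (hYu : Yup.measure = Xdown.measure.withDensity fun t => ENNReal.ofReal (A t))
    (hXupsupp : Xup.measure {t | B t ≠ S t} = 0)
    (hXdownsupp : Xdown.measure {t | A t ≠ S t} = 0)
    (hjump : ∀ s ∈ J, 0 ≤ S s * Δx s + Δy s)
    (hab : a ≤ b) (hSb : 0 ≤ S b) (hε : 0 ≤ ε) (hosc : ∀ u ∈ Ioc a b, |S u - S b| ≤ ε) :
    -ε * (reserveVariation Xup Xdown J Δx b - reserveVariation Xup Xdown J Δx a)
      ≤ S b * (X b - X a) + (Y b - Y a) := by
  have hdown : Ydown b - Ydown a ≤ (S b + ε) * (Xup b - Xup a) :=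
    StieltjesFunction.sub_le_mul_sub_of_ae_le hab hYd (by linarith)
      ((ae_restrict_Ioc_abs_sub_le hXupsupp hosc).mono
        fun u hu => by linarith [(abs_le.1 hu).2])
  have hup : (S b - ε) * (Xdown b - Xdown a) ≤ Yup b - Yup a :=
    StieltjesFunction.mul_sub_le_sub_of_ae_le hab hYu
      ((ae_restrict_Ioc_abs_sub_le hXdownsupp hosc).mono
        fun u hu => by linarith [(abs_le.1 hu).1])
  have hjumps : ∀ s ∈ J.filter (· ∈ Ioc a b), -ε * |Δx s| ≤ S b * Δx s + Δy s := by
    intro s hs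
    obtain ⟨hsJ, hsab⟩ := Finset.mem_filter.1 hs
    have hdev : |(S b - S s) * Δx s| ≤ ε * |Δx s| := by
      rw [abs_mul, abs_sub_comm]
      exact mul_le_mul_of_nonneg_right (hosc s hsab) (abs_nonneg _)
    linarith [hjump s hsJ, neg_abs_le ((S b - S s) * Δx s)]
  have hjumpsum := Finset.sum_le_sum hjumps
  rw [← Finset.mul_sum, Finset.sum_add_distrib, ← Finset.mul_sum] at hjumpsum
  simp only [reserveVariation]
  rw [hX b, hX a, hY b, hY a, Finset.sum_filter_le_eq_add_sum_filter_Ioc J Δx hab,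
    Finset.sum_filter_le_eq_add_sum_filter_Ioc J Δy hab,
    Finset.sum_filter_le_eq_add_sum_filter_Ioc J (fun s => |Δx s|) hab]
  nlinarith

theorem stmt_17_general
    (α τ β x₀ y₀ T : ℝ)
    (hα : α ∈ Set.Ioo (0 : ℝ) 1) (hτ : τ ∈ Set.Ioo (0 : ℝ) 1)
    (hβ : β = α / (1 - α)) (hT : 0 ≤ T)
    (Sstar : ℝ → ℝ) (hScont : Continuous Sstar) (hSpos : ∀ t, 0 < Sstar t)
    (Xup Xdown Yup Ydown : StieltjesFunction ℝ)
    (hXup0 : ∀ t ≤ (0 : ℝ), Xup t = 0) (hXdown0 : ∀ t ≤ (0 : ℝ), Xdown t = 0)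
    (J : Finset ℝ) (hJ : ↑J ⊆ Set.Ioc 0 T)
    (Δx Δy : ℝ → ℝ)
    (X Y Xleft Yleft B A : ℝ → ℝ)
    (hX : ∀ t, X t = x₀ + Xup t - Xdown t + ∑ s ∈ J.filter (· ≤ t), Δx s)
    (hY : ∀ t, Y t = y₀ + Yup t - Ydown t + ∑ s ∈ J.filter (· ≤ t), Δy s)
    (hXleft : ∀ t, Xleft t = x₀ + Xup t - Xdown t + ∑ s ∈ J.filter (· < t), Δx s)
    (hYleft : ∀ t, Yleft t = y₀ + Yup t - Ydown t + ∑ s ∈ J.filter (· < t), Δy s)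
    (hXpos : ∀ t, 0 < X t) (hYpos : ∀ t, 0 < Y t)
    (hXleftpos : ∀ t, 0 < Xleft t) (hYleftpos : ∀ t, 0 < Yleft t)
    (hYd : Ydown.measure = Xup.measure.withDensity fun t => ENNReal.ofReal (B t))
    (hYu : Yup.measure = Xdown.measure.withDensity fun t => ENNReal.ofReal (A t))
    (hXupsupp : Xup.measure {t | B t ≠ Sstar t} = 0)
    (hXdownsupp : Xdown.measure {t | A t ≠ Sstar t} = 0)
    (hNAjump : ∀ s ∈ J,
      (1 - τ) * β * Yleft s / Xleft s ≤ Sstar s ∧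
      Sstar s ≤ β * Yleft s / ((1 - τ) * Xleft s))
    (hjump : ∀ s ∈ J, Δx s * Δy s ≤ 0 ∧
      (Xleft s) ^ α * (Yleft s) ^ (1 - α) ≤
        (Xleft s + (1 - τ * heaviside (Δx s)) * Δx s) ^ α *
          (Yleft s + (1 - τ * heaviside (Δy s)) * Δy s) ^ (1 - α))
    (I : ℝ)
    (hI : ∀ ε > 0, ∃ δ > 0, ∀ n : ℕ, ∀ t : Fin (n + 1) → ℝ,
      Monotone t → t 0 = 0 → t (Fin.last n) = T →
      (∀ i : Fin n, t i.succ - t i.castSucc < δ) →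
      |(∑ i : Fin n, (x₀ - X (t i.castSucc)) * (Sstar (t i.succ) - Sstar (t i.castSucc))) - I| < ε) :
    Y 0 + X 0 * Sstar T - (Y T + X T * Sstar T) ≤ I := by
  have hjumpval : ∀ s ∈ J, 0 ≤ Sstar s * Δx s + Δy s := fun s hs => by
    have hXs : X s = Xleft s + Δx s := by
      rw [hX, hXleft, Finset.sum_filter_le_eq_sum_filter_lt_add hs]; ring
    have hYs : Y s = Yleft s + Δy s := by
      rw [hY, hYleft, Finset.sum_filter_le_eq_sum_filter_lt_add hs]; ring
    exact jump_value_nonneg hα hτ.2 hβ (hXleftpos s) (hYleftpos s) (hXs ▸ hXpos s)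
      (hYs ▸ hYpos s) (hNAjump s hs).1 (hNAjump s hs).2 (hjump s hs).1 (hjump s hs).2
  have hX0 : X 0 = x₀ := by
    rw [hX, hXup0 0 le_rfl, hXdown0 0 le_rfl,
      Finset.filter_false_of_mem fun s hs => not_le.2 (hJ hs).1]
    simp
  set V := reserveVariation Xup Xdown J Δx
  refine le_of_forall_pos_le_add fun ε hε => ?_
  obtain ⟨δ₀, hδ₀, hRS⟩ := hI (ε / 2) (half_pos hε)
  set ε' := ε / 2 / (|V T - V 0| + 1)
  have hε' : 0 < ε' := by positivity
  have hε'V : ε' * (V T - V 0) ≤ ε / 2 :=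
    calc ε' * (V T - V 0) ≤ ε' * (|V T - V 0| + 1) :=
          mul_le_mul_of_nonneg_left (by linarith [le_abs_self (V T - V 0)]) hε'.le
      _ = ε / 2 := div_mul_cancel₀ _ (by positivity)
  obtain ⟨δ₁, hδ₁, hosc⟩ :=
    (hScont.continuousOn (s := Icc 0 T)).exists_pos_forall_Ioc_abs_sub_le hε'
  obtain ⟨n, t, hmono, ht0, htT, hmesh⟩ := exists_partition_mesh_lt hT (lt_min hδ₀ hδ₁)
  have hmem : ∀ i, t i ∈ Icc 0 T :=
    fun i => ⟨ht0 ▸ hmono (Fin.zero_le i), htT ▸ hmono (Fin.le_last i)⟩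
  have hΨ := sub_le_riemannSum_add_of_increment_ge t Sstar X Y V fun i =>
    reserve_value_increment_ge hX hY hYd hYu hXupsupp hXdownsupp hjumpval
      (hmono (Fin.castSucc_le_succ i)) (hSpos _).le hε'.le
      (hosc _ _ (hmem _).1 (hmem _).2 ((hmesh i).trans_le (min_le_right _ _)))
  have hRS' := abs_lt.1 (hRS n t hmono ht0 htT fun i => (hmesh i).trans_le (min_le_left _ _))
  rw [ht0, htT] at hΨ
  rw [hX0] at hΨ ⊢
  linarith

/-- **Super-hedge theorem.** Let `S*` be a positive continuous (pathwise) price, and let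
`(X,Y)` be the G3M reserve processes with fee `τ ∈ (0,1)`: continuous nondecreasing parts
`X↑, X↓, Y↑, Y↓` (Stieltjes functions) with `dY↓ = B dX↑`, `dY↑ = A dX↓`, `X↑` (resp. `X↓`)
increasing only on `{B = S*}` (resp. `{A = S*}`), where `B = (1-τ)βY/X`,
`A = βY/((1-τ)X)`, plus finitely many jumps at times in `J` satisfying the no-arbitrage
bound `B₋ ≤ S* ≤ A₋` and the trading-function inequality. If `I` is the (pathwise) integral
`∫₀^T (X₀ - X_t) dS*_t`, defined as the limit of left-endpoint Riemann sums, then the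
Impermanent Loss `Ψ_T = Y₀ + X₀·S*_T - V_T` (with `V = Y + X·S*`) is dominated by the gains
`I = ∫₀^T (X₀ - X_t) dS*_t` of the rebalancing strategy: `Ψ_T ≤ I`. -/
theorem stmt_17
    (α τ β x₀ y₀ T : ℝ)
    (hα : α ∈ Set.Ioo (0 : ℝ) 1) (hτ : τ ∈ Set.Ioo (0 : ℝ) 1)
    (hβ : β = α / (1 - α)) (hx₀ : 0 < x₀) (hy₀ : 0 < y₀) (hT : 0 ≤ T)
    (Sstar : ℝ → ℝ) (hScont : Continuous Sstar) (hSpos : ∀ t, 0 < Sstar t)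
    (Xup Xdown Yup Ydown : StieltjesFunction ℝ)
    (hXupc : Continuous fun t => Xup t) (hXdownc : Continuous fun t => Xdown t)
    (hYupc : Continuous fun t => Yup t) (hYdownc : Continuous fun t => Ydown t)
    (hXup0 : ∀ t ≤ (0 : ℝ), Xup t = 0) (hXdown0 : ∀ t ≤ (0 : ℝ), Xdown t = 0)
    (hYup0 : ∀ t ≤ (0 : ℝ), Yup t = 0) (hYdown0 : ∀ t ≤ (0 : ℝ), Ydown t = 0)
    (J : Finset ℝ) (hJ : ↑J ⊆ Set.Ioc 0 T)
    (Δx Δy : ℝ → ℝ)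
    (X Y Xleft Yleft B A : ℝ → ℝ)
    (hX : ∀ t, X t = x₀ + Xup t - Xdown t + ∑ s ∈ J.filter (· ≤ t), Δx s)
    (hY : ∀ t, Y t = y₀ + Yup t - Ydown t + ∑ s ∈ J.filter (· ≤ t), Δy s)
    (hXleft : ∀ t, Xleft t = x₀ + Xup t - Xdown t + ∑ s ∈ J.filter (· < t), Δx s)
    (hYleft : ∀ t, Yleft t = y₀ + Yup t - Ydown t + ∑ s ∈ J.filter (· < t), Δy s)
    (hXpos : ∀ t, 0 < X t) (hYpos : ∀ t, 0 < Y t)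
    (hXleftpos : ∀ t, 0 < Xleft t) (hYleftpos : ∀ t, 0 < Yleft t)
    (hB : ∀ t, B t = (1 - τ) * β * Y t / X t)
    (hA : ∀ t, A t = β * Y t / ((1 - τ) * X t))
    (hYd : Ydown.measure = Xup.measure.withDensity fun t => ENNReal.ofReal (B t))
    (hYu : Yup.measure = Xdown.measure.withDensity fun t => ENNReal.ofReal (A t))
    (hXupsupp : Xup.measure {t | B t ≠ Sstar t} = 0)
    (hXdownsupp : Xdown.measure {t | A t ≠ Sstar t} = 0)
    (hNAjump : ∀ s ∈ J,
      (1 - τ) * β * Yleft s / Xleft s ≤ Sstar s ∧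
      Sstar s ≤ β * Yleft s / ((1 - τ) * Xleft s))
    (hjump : ∀ s ∈ J, Δx s * Δy s ≤ 0 ∧
      (Xleft s) ^ α * (Yleft s) ^ (1 - α) ≤
        (Xleft s + (1 - τ * heaviside (Δx s)) * Δx s) ^ α *
          (Yleft s + (1 - τ * heaviside (Δy s)) * Δy s) ^ (1 - α))
    (I : ℝ)
    (hI : ∀ ε > 0, ∃ δ > 0, ∀ n : ℕ, ∀ t : Fin (n + 1) → ℝ,
      Monotone t → t 0 = 0 → t (Fin.last n) = T →
      (∀ i : Fin n, t i.succ - t i.castSucc < δ) →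
      |(∑ i : Fin n, (x₀ - X (t i.castSucc)) * (Sstar (t i.succ) - Sstar (t i.castSucc))) - I| < ε) :
    Y 0 + X 0 * Sstar T - (Y T + X T * Sstar T) ≤ I :=
  stmt_17_general α τ β x₀ y₀ T hα hτ hβ hT Sstar hScont hSpos Xup Xdown Yup Ydown hXup0 hXdown0 J
    hJ Δx Δy X Y Xleft Yleft B A hX hY hXleft hYleft hXpos hYpos hXleftpos hYleftpos hYd hYu
    hXupsupp hXdownsupp hNAjump hjump I hI
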